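/- arXiv:1404.6067 — 6 statements merged into one kernel-verified Lean document; each statement's English description precedes it below -/
import Mathlib

section
/- For any two matroids M and N on a common finite ground set E, there is a maximal wave, i.e., a wave (X, S^M, S^N) such that for every wave (Y, T^M, T^N) we have Y ⊆ X. Moreover, this maximal wave contains every element that is contained in any wave. -/
open Matroid Set

variable {α : Type*}

/-- Deletion of a set from a matroid: restriction to the complement. -/
def Matroid.del (M : Matroid α) (D : Set α) : Matroid α := M ↾ (M.E \ D)

/-- Contraction of a set in a matroid, defined by duality. -/
def Matroid.con (M : Matroid α) (C : Set α) : Matroid α := ((M✶.del C))✶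

/-- A circuit: a minimal dependent set. -/
def IsCircuitOf (M : Matroid α) (C : Set α) : Prop := Minimal M.Dep C

/-- A wave for the pair `(M, N)`: disjoint sets `SM, SN ⊆ X` spanning `X`
in the respective restrictions. -/
def IsWave (M N : Matroid α) (X SM SN : Set α) : Prop :=
  SM ⊆ X ∧ SN ⊆ X ∧ X ⊆ M.E ∧ Disjoint SM SN ∧
  (M ↾ X).Spanning SM ∧ (N ↾ X).Spanning SN

/-! Waves are closed under union, so on a finite ground set a wave with inclusion-maximal
ground set contains the ground set of every other wave. The union of `(X, SM, SN)` and
`(Y, TM, TN)` is `(X ∪ Y, SM ∪ (TM \ X), SN ∪ (TN \ X))`: the part of `TM` inside `X` is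
spanned by `SM` anyway, and dropping it keeps the two spanning sets disjoint. -/

lemma Matroid.restrict_spanning_union_diff {M : Matroid α} {X Y S T : Set α}
    (hS : (M ↾ X).Spanning S) (hT : (M ↾ Y).Spanning T) :
    (M ↾ (X ∪ Y)).Spanning (S ∪ (T \ X)) := by
  rw [restrict_spanning_iff'] at hS hT ⊢
  obtain ⟨hXS, hSX⟩ := hS
  obtain ⟨hYT, hTY⟩ := hT
  have hTE : T ∩ M.E ⊆ M.closure S ∪ (T \ X) := by
    rintro e ⟨heT, heE⟩
    by_cases heX : e ∈ X
    · exact Or.inl (hXS ⟨heX, heE⟩)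
    · exact Or.inr ⟨heT, heX⟩
  have hclT : M.closure T ⊆ M.closure (S ∪ (T \ X)) :=
    calc M.closure T = M.closure (T ∩ M.E) := (M.closure_inter_ground T).symm
      _ ⊆ M.closure (M.closure S ∪ (T \ X)) := M.closure_subset_closure hTE
      _ = M.closure (S ∪ (T \ X)) := M.closure_union_closure_left_eq S _
  refine ⟨?_, union_subset_union hSX (sdiff_subset.trans hTY)⟩
  rw [union_inter_distrib_right]
  exact union_subset (hXS.trans (M.closure_subset_closure subset_union_left)) (hYT.trans hclT)

lemma isWave_empty (M N : Matroid α) : IsWave M N ∅ ∅ ∅ :=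
  ⟨subset_rfl, subset_rfl, empty_subset _, disjoint_empty _,
    (M ↾ ∅).ground_spanning, (N ↾ ∅).ground_spanning⟩

lemma IsWave.union {M N : Matroid α} {X SM SN Y TM TN : Set α}
    (hX : IsWave M N X SM SN) (hY : IsWave M N Y TM TN) :
    IsWave M N (X ∪ Y) (SM ∪ (TM \ X)) (SN ∪ (TN \ X)) := by
  obtain ⟨hSMX, hSNX, hXE, hS, hSM, hSN⟩ := hX
  obtain ⟨hTMY, hTNY, hYE, hT, hTM, hTN⟩ := hY
  refine ⟨union_subset_union hSMX (sdiff_subset.trans hTMY),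
    union_subset_union hSNX (sdiff_subset.trans hTNY), union_subset hXE hYE, ?_,
    restrict_spanning_union_diff hSM hTM, restrict_spanning_union_diff hSN hTN⟩
  rw [disjoint_union_left, disjoint_union_right, disjoint_union_right]
  exact ⟨⟨hS, disjoint_sdiff_right.mono_left hSMX⟩, disjoint_sdiff_left.mono_right hSNX,
    hT.mono sdiff_subset sdiff_subset⟩

theorem maximal_wave_exists_general (M N : Matroid α) (hfin : M.E.Finite) :
    ∃ X SM SN, IsWave M N X SM SN ∧
      ∀ Y TM TN, IsWave M N Y TM TN → Y ⊆ X := by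
  have hfinite : {X | ∃ SM SN, IsWave M N X SM SN}.Finite :=
    hfin.finite_subsets.subset fun _ ⟨_, _, _, _, hXE, _⟩ ↦ hXE
  obtain ⟨X, ⟨SM, SN, hX⟩, hmax⟩ := hfinite.exists_maximal ⟨∅, ∅, ∅, isWave_empty M N⟩
  exact ⟨X, SM, SN, hX, fun Y TM TN hY ↦
    subset_union_right.trans (hmax ⟨_, _, hX.union hY⟩ subset_union_left)⟩

/-- There is a maximal wave, containing every element contained in any wave. -/
theorem maximal_wave_exists (M N : Matroid α) (hE : M.E = N.E) (hfin : M.E.Finite) :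
    ∃ X SM SN, IsWave M N X SM SN ∧
      ∀ Y TM TN, IsWave M N Y TM TN → Y ⊆ X :=
  maximal_wave_exists_general M N hfin
end

section
/- Let (X, S^M, S^N) be a wave for a pair (M, N) of matroids on the same ground set E, and let (Y, T^M, T^N) be a wave for the pair (M/X, N/X) of contractions. Then (X ∪ Y, S^M ∪ T^M, S^N ∪ T^N) is a wave for (M, N). -/
/-!
Since `S` spans `X` and `(M ／ X).closure T = M.closure (T ∪ X) \ X`, every element of `X ∪ Y`
lies in `M.closure (S ∪ T)`. Disjointness of the new spanning sets comes from `Y` avoiding `X`.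
-/

open Matroid Set

variable {α : Type*}

namespace Matroid

lemma con_eq_contract (M : Matroid α) (C : Set α) : M.con C = M ／ C := rfl

variable {M : Matroid α} {X Y S T : Set α}

lemma Spanning.restrict_union_of_contract (hS : (M ↾ X).Spanning S)
    (hT : ((M ／ X) ↾ Y).Spanning T) : (M ↾ (X ∪ Y)).Spanning (S ∪ T) := by
  rw [restrict_spanning_iff'] at hS hT ⊢
  obtain ⟨hXcl, hSX⟩ := hS
  obtain ⟨hYcl, hTY⟩ := hT
  rw [contract_ground, contract_closure_eq] at hYcl
  have hXcl' : X ∩ M.E ⊆ M.closure (S ∪ T) :=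
    hXcl.trans (M.closure_subset_closure subset_union_left)
  have hTXcl : M.closure (T ∪ X) ⊆ M.closure (S ∪ T) := by
    rw [← closure_inter_ground, union_inter_distrib_right]
    exact closure_subset_closure_of_subset_closure <| union_subset
      (M.subset_closure_of_subset' (inter_subset_left.trans subset_union_right) inter_subset_right)
      hXcl'
  refine ⟨?_, union_subset_union hSX hTY⟩
  rintro e ⟨heX | heY, he⟩
  · exact hXcl' ⟨heX, he⟩
  · by_cases heX : e ∈ X
    · exact hXcl' ⟨heX, he⟩
    · exact hTXcl (hYcl ⟨heY, he, heX⟩).1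

end Matroid

theorem wave_union_contract_wave_general (M N : Matroid α)
    (X SM SN Y TM TN : Set α)
    (hX : IsWave M N X SM SN) (hY : IsWave (M.con X) (N.con X) Y TM TN) :
    IsWave M N (X ∪ Y) (SM ∪ TM) (SN ∪ TN) := by
  obtain ⟨hSMX, hSNX, hXE, hSMSN, hSMsp, hSNsp⟩ := hX
  obtain ⟨hTMY, hTNY, hYE, hTMTN, hTMsp, hTNsp⟩ := hY
  rw [con_eq_contract, contract_ground, subset_sdiff] at hYE
  have hXY : Disjoint X Y := hYE.2.symm
  refine ⟨union_subset_union hSMX hTMY, union_subset_union hSNX hTNY,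
    union_subset hXE hYE.1, ?_, hSMsp.restrict_union_of_contract hTMsp,
    hSNsp.restrict_union_of_contract hTNsp⟩
  exact disjoint_union_left.2 ⟨disjoint_union_right.2 ⟨hSMSN, hXY.mono hSMX hTNY⟩,
    disjoint_union_right.2 ⟨(hXY.mono hSNX hTMY).symm, hTMTN⟩⟩

/-- A wave for `(M, N)` together with a wave for the contractions `(M/X, N/X)`
combine to a wave for `(M, N)`. -/
theorem wave_union_contract_wave (M N : Matroid α) (hE : M.E = N.E) (hfin : M.E.Finite)
    (X SM SN Y TM TN : Set α)
    (hX : IsWave M N X SM SN) (hY : IsWave (M.con X) (N.con X) Y TM TN) :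
    IsWave M N (X ∪ Y) (SM ∪ TM) (SN ∪ TN) :=
  wave_union_contract_wave_general M N X SM SN Y TM TN hX hY
end

section
/- Let (M, N) be a pair of matroids on a common finite ground set E, and let e ∈ E. Then either there is a cohindrance focusing on e, or e is contained in some wave. -/
/-!
Put `g X = r_M X + r_N X - |X|` and let `W ⊆ E` minimise `g`, as large as possible. By Edmonds'
covering theorem, `X` is the union of an `(M ↾ X)✶`-independent and an `(N ↾ X)✶`-independent set
as soon as `g X ≤ g U` for all `U ⊆ X`; the complements of these two sets then form a wave on `X`.
So `W` carries a wave, and we are done if `e ∈ W`. Otherwise `g (W ∪ Z) > g W` for every nonempty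
`Z ⊆ E \ W`, which is the covering condition for the contractions `M ／ W`, `N ／ W` on `E \ W`
with `e` prescribed in both parts; the resulting cover gives a cowave on `E \ W` whose two
spanning sets avoid `e`.
-/

open Matroid Set

variable {α : Type*}

theorem Set.Finite.exists_minimizer_lt_of_ssubset {β : Type*} [LinearOrder β] {E : Set α}
    (hE : E.Finite) (g : Set α → β) :
    ∃ W ⊆ E, (∀ U ⊆ E, g W ≤ g U) ∧ ∀ U ⊆ E, W ⊂ U → g W < g U := by
  obtain ⟨W₀, hW₀E, hW₀⟩ :=
    exists_min_image {U | U ⊆ E} g hE.finite_subsets ⟨∅, empty_subset E⟩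
  obtain ⟨W, ⟨hWE, hgW⟩, hW⟩ := exists_max_image {U | U ⊆ E ∧ g U = g W₀} ncard
    (hE.finite_subsets.subset fun U hU ↦ hU.1) ⟨W₀, hW₀E, rfl⟩
  refine ⟨W, hWE, fun U hU ↦ hgW ▸ hW₀ U hU, fun U hUE hWU ↦ ?_⟩
  by_contra! hUW
  have hU : g U = g W₀ := le_antisymm (hgW ▸ hUW) (hW₀ U hUE)
  exact (ncard_lt_ncard hWU (hE.subset hUE)).not_ge (hW U ⟨hUE, hU⟩)

theorem Set.ncard_insert_sdiff {X Y : Set α} {e : α} (hX : X.Finite) (he : e ∉ Y) :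
    (insert e X \ Y).ncard = (X \ insert e Y).ncard + 1 := by
  rw [insert_sdiff_of_notMem _ he, ← insert_sdiff_singleton, sdiff_sdiff, union_singleton,
    ncard_insert_of_notMem (fun h ↦ h.2 (mem_insert e Y)) hX.sdiff]

namespace Matroid

variable {M N : Matroid α} {E I J KM KN R W X Y Z : Set α} {e : α}

noncomputable def rk (M : Matroid α) (X : Set α) : ℕ := (M.eRk X).toNat

@[simp] lemma rk_empty (M : Matroid α) : M.rk ∅ = 0 := by
  simp [rk]

lemma rk_le_ncard (M : Matroid α) (hX : X.Finite) : M.rk X ≤ X.ncard :=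
  ENat.toNat_le_toNat (M.eRk_le_encard X) hX.encard_lt_top.ne

lemma rk_restrict (M : Matroid α) (hXR : X ⊆ R) : (M ↾ R).rk X = M.rk X := by
  rw [rk, rk, restrict_eRk_eq _ hXR]

lemma rk_insert_of_mem_closure (he : e ∈ M.closure X) : M.rk (insert e X) = M.rk X := by
  rw [rk, rk, ← eRk_insert_closure_eq, insert_eq_of_mem he, eRk_closure_eq]

lemma cast_rk_eq (M : Matroid α) [M.RankFinite] (X : Set α) : (M.rk X : ℕ∞) = M.eRk X :=
  ENat.natCast_toNat (M.isRkFinite_set X).eRk_lt_top.ne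

lemma rk_mono [M.RankFinite] (hXY : X ⊆ Y) : M.rk X ≤ M.rk Y := by
  have := M.eRk_mono hXY
  rwa [← cast_rk_eq, ← cast_rk_eq, Nat.cast_le] at this

lemma rk_inter_add_rk_union_le (M : Matroid α) [M.RankFinite] (X Y : Set α) :
    M.rk (X ∩ Y) + M.rk (X ∪ Y) ≤ M.rk X + M.rk Y := by
  have := M.eRk_submod X Y
  simp only [← cast_rk_eq] at this
  exact_mod_cast this

lemma rk_insert_le_add_one (M : Matroid α) [M.RankFinite] (e : α) (X : Set α) :
    M.rk (insert e X) ≤ M.rk X + 1 := by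
  have := M.eRk_insert_le_add_one e X
  simp only [← cast_rk_eq] at this
  exact_mod_cast this

lemma indep_iff_rk_eq_ncard [M.RankFinite] (hI : I.Finite) : M.Indep I ↔ M.rk I = I.ncard := by
  rw [indep_iff_eRk_eq_encard_of_finite hI, ← cast_rk_eq, ← hI.cast_ncard_eq, Nat.cast_inj]

lemma rk_dual_add_rk_ground (M : Matroid α) [M.Finite] (hX : X ⊆ M.E) :
    M✶.rk X + M.rk M.E = M.rk (M.E \ X) + X.ncard := by
  have := M.eRk_dual_add_eRank X hX
  rw [eRank_def, ← cast_rk_eq, ← cast_rk_eq, ← cast_rk_eq,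
    ← (M.ground_finite.subset hX).cast_ncard_eq] at this
  exact_mod_cast this

lemma rk_dual_restrict_add (M : Matroid α) [M.Finite] (hZX : Z ⊆ X) (hX : X ⊆ M.E) :
    (M ↾ X)✶.rk Z + M.rk X = M.rk (X \ Z) + Z.ncard := by
  have : (M ↾ X).Finite := ⟨M.ground_finite.subset hX⟩
  have h := (M ↾ X).rk_dual_add_rk_ground (X := Z) hZX
  rwa [restrict_ground_eq, rk_restrict _ subset_rfl, rk_restrict _ sdiff_subset] at h

-- `(M✶ ↾ Y)✶` is the contraction `M ／ (M.E \ Y)`.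
lemma rk_dual_restrict_dual_add (M : Matroid α) [M.Finite] (hZY : Z ⊆ Y) (hY : Y ⊆ M.E) :
    (M✶ ↾ Y)✶.rk Z + M.rk (M.E \ Y) = M.rk (M.E \ Y ∪ Z) := by
  have h₁ := M✶.rk_dual_restrict_add hZY hY
  have h₂ := M.rk_dual_add_rk_ground hY
  have h₃ := M.rk_dual_add_rk_ground (sdiff_subset.trans hY : Y \ Z ⊆ M.E)
  have h₄ := ncard_sdiff_add_ncard_of_subset hZY (M.ground_finite.subset hY)
  rw [sdiff_sdiff_right, inter_eq_self_of_subset_right (hZY.trans hY)] at h₃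
  omega

/-- Edmonds' condition for covering `E` by an `M`-independent set containing `KM` and an
`N`-independent set containing `KN`; for `KM = KN = ∅` it reads `|X| ≤ r_M X + r_N X`. -/
def CoverCondition (E : Set α) (M N : Matroid α) (KM KN : Set α) : Prop :=
  ∀ X ⊆ E, (X \ (KM ∪ KN)).ncard + M.rk KM + N.rk KN ≤ M.rk (X ∪ KM) + N.rk (X ∪ KN)

namespace CoverCondition

lemma symm (h : CoverCondition E M N KM KN) : CoverCondition E N M KN KM := fun X hX ↦ by
  have := h X hX
  rw [union_comm KN KM]
  omega

lemma insert_right_of_mem_closure [N.RankFinite] (h : CoverCondition E M N KM KN)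
    (hE : E.Finite) (he : e ∈ E) (heK : e ∉ KM ∪ KN) (hcl : e ∈ M.closure KM) :
    e ∉ N.closure KN ∧ CoverCondition E M N KM (insert e KN) := by
  refine ⟨fun hN ↦ ?_, fun X hX ↦ ?_⟩
  · have := h {e} (singleton_subset_iff.2 he)
    rw [singleton_union, singleton_union, rk_insert_of_mem_closure hcl,
      rk_insert_of_mem_closure hN, sdiff_eq_left.2 (disjoint_singleton_left.2 heK),
      ncard_singleton] at this
    omega
  have h' := h (insert e X) (insert_subset he hX)
  rw [insert_union, insert_union, rk_insert_of_mem_closure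
    (M.closure_subset_closure subset_union_right hcl), ← union_insert,
    ncard_insert_sdiff (hE.subset hX) heK] at h'
  have := N.rk_insert_le_add_one e KN
  rw [union_insert]
  omega

lemma insert_left_or_insert_right [M.RankFinite] [N.RankFinite]
    (h : CoverCondition E M N KM KN) (hE : E.Finite) (he : e ∈ E) (heK : e ∉ KM ∪ KN) :
    CoverCondition E M N (insert e KM) KN ∨ CoverCondition E M N KM (insert e KN) := by
  -- Submodularity on `X ∪ {e} ∪ Y` and `X ∩ Y` turns failures at `X` and `Y` into a violation
  -- of `h`.
  unfold CoverCondition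
  by_contra! hfail
  obtain ⟨⟨X, hXE, hX⟩, ⟨Y, hYE, hY⟩⟩ := hfail
  rw [insert_union] at hX
  rw [show KM ∪ insert e KN = insert e (KM ∪ KN) from union_insert] at hY
  have hXY := h (insert e (X ∪ Y)) (insert_subset he (union_subset hXE hYE))
  rw [insert_union, insert_union, ncard_insert_sdiff ((hE.subset hXE).union (hE.subset hYE)) heK]
    at hXY
  have hXY' := h (X ∩ Y) (inter_subset_left.trans hXE)
  have hsubM := M.rk_inter_add_rk_union_le (X ∪ insert e KM) (Y ∪ KM)
  have hsubN := N.rk_inter_add_rk_union_le (X ∪ KN) (Y ∪ insert e KN)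
  have hmonoM := M.rk_mono (show X ∩ Y ∪ KM ⊆ (X ∪ insert e KM) ∩ (Y ∪ KM) by tauto_set)
  have hmonoN := N.rk_mono (show X ∩ Y ∪ KN ⊆ (X ∪ KN) ∩ (Y ∪ insert e KN) by tauto_set)
  rw [show X ∪ insert e KM ∪ (Y ∪ KM) = insert e (X ∪ Y ∪ KM) by
    simp only [insert_eq]; tauto_set] at hsubM
  rw [show X ∪ KN ∪ (Y ∪ insert e KN) = insert e (X ∪ Y ∪ KN) by
    simp only [insert_eq]; tauto_set] at hsubN
  have hcard := ncard_union_add_ncard_inter (X \ insert e (KM ∪ KN)) (Y \ insert e (KM ∪ KN))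
    ((hE.subset hXE).sdiff) ((hE.subset hYE).sdiff)
  rw [← union_sdiff_distrib, show X \ insert e (KM ∪ KN) ∩ (Y \ insert e (KM ∪ KN)) =
    (X ∩ Y) \ insert e (KM ∪ KN) by tauto_set] at hcard
  have hinter : ((X ∩ Y) \ insert e (KM ∪ KN)).ncard ≤ ((X ∩ Y) \ (KM ∪ KN)).ncard :=
    ncard_le_ncard (sdiff_subset_sdiff_right (subset_insert e _))
      ((hE.subset (inter_subset_left.trans hXE)).sdiff)
  have := M.rk_insert_le_add_one e KM
  have := N.rk_insert_le_add_one e KN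
  omega

lemma exists_insert [M.RankFinite] [N.RankFinite] (h : CoverCondition E M N KM KN)
    (hE : E.Finite) (he : e ∈ E) (heK : e ∉ KM ∪ KN) :
    (e ∉ M.closure KM ∧ CoverCondition E M N (insert e KM) KN) ∨
      (e ∉ N.closure KN ∧ CoverCondition E M N KM (insert e KN)) := by
  by_cases hM : e ∈ M.closure KM
  · exact .inr (h.insert_right_of_mem_closure hE he heK hM)
  by_cases hN : e ∈ N.closure KN
  · obtain ⟨hM', h'⟩ := h.symm.insert_right_of_mem_closure hE he (by rwa [union_comm]) hN
    exact .inl ⟨hM', h'.symm⟩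
  exact (h.insert_left_or_insert_right hE he heK).imp (⟨hM, ·⟩) (⟨hN, ·⟩)

theorem exists_indep_union_eq (h : CoverCondition E M N KM KN) (hE : E.Finite) (hME : M.E = E)
    (hNE : N.E = E) (hKM : M.Indep KM) (hKN : N.Indep KN) :
    ∃ I J, M.Indep I ∧ N.Indep J ∧ KM ⊆ I ∧ KN ⊆ J ∧ I ∪ J = E := by
  have : M.Finite := ⟨hME ▸ hE⟩
  have : N.Finite := ⟨hNE ▸ hE⟩
  induction hn : (E \ (KM ∪ KN)).ncard generalizing KM KN with
  | zero =>
    have hcov : E ⊆ KM ∪ KN := sdiff_eq_empty.1 ((ncard_eq_zero hE.sdiff).1 hn)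
    exact ⟨KM, KN, hKM, hKN, subset_rfl, subset_rfl,
      (union_subset (hME ▸ hKM.subset_ground) (hNE ▸ hKN.subset_ground)).antisymm hcov⟩
  | succ n ih =>
    obtain ⟨e, heE, heK⟩ := nonempty_of_ncard_ne_zero (hn.trans_ne n.succ_ne_zero)
    have hn' : (E \ insert e (KM ∪ KN)).ncard = n := by
      rw [← union_singleton, ← sdiff_sdiff,
        ncard_sdiff_singleton_of_mem (show e ∈ E \ (KM ∪ KN) from ⟨heE, heK⟩), hn,
        Nat.add_sub_cancel]
    rcases h.exists_insert hE heE heK with ⟨hcl, h'⟩ | ⟨hcl, h'⟩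
    · obtain ⟨I, J, hI, hJ, hKI, hKJ, hIJ⟩ :=
        ih h' ((hKM.insert_indep_iff_of_notMem fun h ↦ heK (.inl h)).2 ⟨hME ▸ heE, hcl⟩) hKN
          (by rwa [insert_union])
      exact ⟨I, J, hI, hJ, (subset_insert e KM).trans hKI, hKJ, hIJ⟩
    · obtain ⟨I, J, hI, hJ, hKI, hKJ, hIJ⟩ :=
        ih h' hKM ((hKN.insert_indep_iff_of_notMem fun h ↦ heK (.inr h)).2 ⟨hNE ▸ heE, hcl⟩)
          (by rwa [union_insert])
      exact ⟨I, J, hI, hJ, hKI, (subset_insert e KN).trans hKJ, hIJ⟩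

end CoverCondition

lemma isWave_sdiff_sdiff (hX : X ⊆ M.E) (hI : (M ↾ X)✶.Indep I) (hJ : (N ↾ X)✶.Indep J)
    (hIJ : I ∪ J = X) : IsWave M N X (X \ I) (X \ J) :=
  ⟨sdiff_subset, sdiff_subset, hX,
    disjoint_sdiff_left.mono_right (sdiff_subset_iff.2 (by rw [union_comm, hIJ])),
    Coindep.compl_spanning hI, Coindep.compl_spanning hJ⟩

lemma exists_isWave_of_forall_subset [M.Finite] (hE : M.E = N.E) (hX : X ⊆ M.E)
    (h : ∀ U ⊆ X, M.rk X + N.rk X + U.ncard ≤ M.rk U + N.rk U + X.ncard) :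
    ∃ SM SN, IsWave M N X SM SN := by
  have : N.Finite := ⟨hE ▸ M.ground_finite⟩
  have hXfin := M.ground_finite.subset hX
  have hcond : CoverCondition X (M ↾ X)✶ (N ↾ X)✶ ∅ ∅ := fun Z hZ ↦ by
    have hM := M.rk_dual_restrict_add hZ hX
    have hN := N.rk_dual_restrict_add hZ (hE ▸ hX)
    have hU := h (X \ Z) sdiff_subset
    have hcard := ncard_sdiff_add_ncard_of_subset hZ hXfin
    simp only [union_empty, sdiff_empty, rk_empty]
    omega
  obtain ⟨I, J, hI, hJ, -, -, hIJ⟩ :=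
    hcond.exists_indep_union_eq hXfin rfl rfl (empty_indep _) (empty_indep _)
  exact ⟨_, _, isWave_sdiff_sdiff hX hI hJ hIJ⟩

lemma exists_cohindrance_of_forall_lt [M.Finite] (hE : M.E = N.E) (hW : W ⊆ M.E)
    (he : e ∈ M.E \ W)
    (h : ∀ Z ⊆ M.E \ W, Z.Nonempty → M.rk W + N.rk W + Z.ncard < M.rk (W ∪ Z) + N.rk (W ∪ Z)) :
    ∃ Y TM TN, IsWave M✶ N✶ Y TM TN ∧ e ∈ Y ∧ e ∉ TM ∧ e ∉ TN := by
  have : N.Finite := ⟨hE ▸ M.ground_finite⟩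
  set Y := M.E \ W
  have hY : Y ⊆ M.E := sdiff_subset
  have hYfin : Y.Finite := M.ground_finite.sdiff
  have hYW : M.E \ Y = W := sdiff_sdiff_cancel_left hW
  have : (M✶ ↾ Y).Finite := ⟨hYfin⟩
  have : (N✶ ↾ Y).Finite := ⟨hYfin⟩
  have hlt : ∀ Z ⊆ Y, Z.Nonempty → Z.ncard < (M✶ ↾ Y)✶.rk Z + (N✶ ↾ Y)✶.rk Z := by
    intro Z hZ hZne
    have hM := M.rk_dual_restrict_dual_add hZ hY
    have hN := N.rk_dual_restrict_dual_add hZ (hE ▸ hY)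
    rw [hYW] at hM
    rw [← hE, hYW] at hN
    have := h Z hZ hZne
    omega
  have heY : {e} ⊆ Y := singleton_subset_iff.2 he
  have hMe := (M✶ ↾ Y)✶.rk_le_ncard (finite_singleton e)
  have hNe := (N✶ ↾ Y)✶.rk_le_ncard (finite_singleton e)
  have he₂ := hlt {e} heY (singleton_nonempty e)
  rw [ncard_singleton] at hMe hNe he₂
  have hcond : CoverCondition Y (M✶ ↾ Y)✶ (N✶ ↾ Y)✶ {e} {e} := fun X hX ↦ by
    have := hlt (insert e X) (insert_subset he hX) (insert_nonempty e X)
    have hcard := ncard_sdiff_singleton_add_one (mem_insert e X) ((hYfin.subset hX).insert e)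
    rw [insert_sdiff_of_mem _ (mem_singleton e)] at hcard
    rw [union_self, union_singleton]
    omega
  obtain ⟨I, J, hI, hJ, heI, heJ, hIJ⟩ := hcond.exists_indep_union_eq hYfin rfl rfl
    ((indep_iff_rk_eq_ncard (finite_singleton e)).2 (by rw [ncard_singleton]; omega))
    ((indep_iff_rk_eq_ncard (finite_singleton e)).2 (by rw [ncard_singleton]; omega))
  exact ⟨Y, Y \ I, Y \ J, isWave_sdiff_sdiff hY hI hJ hIJ, he,
    fun h ↦ h.2 (heI rfl), fun h ↦ h.2 (heJ rfl)⟩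

end Matroid

/-- Either there is a cohindrance focusing on `e`, or `e` is contained in a wave. -/
theorem cohindrance_or_wave (M N : Matroid α) (hE : M.E = N.E) (hfin : M.E.Finite)
    (e : α) (he : e ∈ M.E) :
    (∃ Y TM TN, IsWave M✶ N✶ Y TM TN ∧ e ∈ Y ∧ e ∉ TM ∧ e ∉ TN) ∨
    (∃ X SM SN, IsWave M N X SM SN ∧ e ∈ X) := by
  have : M.Finite := ⟨hfin⟩
  obtain ⟨W, hWE, hWmin, hWlt⟩ :=
    hfin.exists_minimizer_lt_of_ssubset fun U ↦ (M.rk U + N.rk U : ℤ) - U.ncard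
  by_cases heW : e ∈ W
  · obtain ⟨SM, SN, hW⟩ := exists_isWave_of_forall_subset hE hWE fun U hU ↦ by
      have := hWmin U (hU.trans hWE)
      omega
    exact .inr ⟨W, SM, SN, hW, heW⟩
  refine .inl (exists_cohindrance_of_forall_lt hE hWE ⟨he, heW⟩ fun Z hZ hZne ↦ ?_)
  have hWZ : W ⊂ W ∪ Z := ssubset_union_left_iff.2 fun hZW ↦ by
    obtain ⟨z, hz⟩ := hZne
    exact (hZ hz).2 (hZW hz)
  have := hWlt (W ∪ Z) (union_subset hWE (hZ.trans sdiff_subset)) hWZ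
  have := ncard_union_eq (disjoint_sdiff_right.mono_right hZ) (hfin.subset hWE)
    (hfin.subset (hZ.trans sdiff_subset))
  omega
end

section
/- Let M and N be matroids on a common finite ground set E and e ∈ E. It cannot happen that both: (a) there is a wave (W, S^M, S^N) for (M, N) with e ∉ W such that e lies in the M-span of W, and (b) there is a cowave (X, T^M, T^N) for (M, N) with e ∈ T^N. (That is, the promises M_+ and M_-^* cannot both be attainable in the same arena.) -/
open Matroid Set

variable {α : Type*}

/-! If `T` cospans `X` in `M`, then `X \ T` is independent in `M ／ (E \ X)`, so for every `S`
the part of `cl_M(S) ∩ X` outside `T` has at most `|S ∩ X|` elements. Apply this with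
`Y = W ∩ X` to both sides of the wave: on the `M`-side `e` is an extra element of
`cl_M(S^M) ∩ X \ T^M`, so `|Y \ T^M| + 1 ≤ |S^M ∩ X|`, and on the `N`-side
`|Y \ T^N| ≤ |S^N ∩ X|`. Since `T^M, T^N` are disjoint and `S^M, S^N` are disjoint subsets of
`W`, adding up gives `|Y| + 1 ≤ |Y|`. -/

namespace Matroid

variable {M : Matroid α} {T X : Set α}

lemma dual_restrict_eq_dual_contract_compl (hX : X ⊆ M.E) :
    M✶ ↾ X = (M ／ (M.E \ X))✶ := by
  rw [dual_contract, ← dual_ground, delete_compl (by simpa)]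

lemma Spanning.indep_contract_compl_sdiff (hT : (M✶ ↾ X).Spanning T) (hX : X ⊆ M.E) :
    (M ／ (M.E \ X)).Indep (X \ T) := by
  rw [dual_restrict_eq_dual_contract_compl hX, spanning_iff_compl_coindep hT.subset_ground,
    dual_coindep_iff] at hT
  simpa [inter_eq_right.mpr hX] using hT

lemma encard_closure_inter_sdiff_le (hT : (M✶ ↾ X).Spanning T) (hX : X ⊆ M.E) (S : Set α) :
    ((M.closure S ∩ X) \ T).encard ≤ (S ∩ X).encard := by
  set C := M.E \ X
  have hsub : (M.closure S ∩ X) \ T ⊆ (M ／ C).closure (S ∩ X) := by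
    rintro x ⟨⟨hxS, hxX⟩, -⟩
    rw [contract_closure_eq]
    refine ⟨?_, fun hxC => hxC.2 hxX⟩
    rw [← closure_inter_ground] at hxS
    refine M.closure_subset_closure (fun y (hy : y ∈ S ∩ M.E) => ?_) hxS
    by_cases hyX : y ∈ X
    · exact .inl ⟨hy.1, hyX⟩
    · exact .inr ⟨hy.2, hyX⟩
  calc ((M.closure S ∩ X) \ T).encard
      ≤ (M ／ C).eRk ((M ／ C).closure (S ∩ X)) :=
        ((hT.indep_contract_compl_sdiff hX).subset
          (sdiff_le_sdiff_right inter_subset_right)).encard_le_eRk_of_subset hsub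
    _ = (M ／ C).eRk (S ∩ X) := eRk_closure_eq _ _
    _ ≤ (S ∩ X).encard := eRk_le_encard _ _

end Matroid

theorem not_both_Mplus_Mminus_star_general (M N : Matroid α) (hE : M.E = N.E) (hfin : M.E.Finite)
    (e : α) :
    ¬ ((∃ W SM SN, IsWave M N W SM SN ∧ e ∉ W ∧ e ∈ M.closure W) ∧
       (∃ X TM TN, IsWave M✶ N✶ X TM TN ∧ e ∈ TN)) := by
  rintro ⟨⟨W, SM, SN, ⟨hSMW, hSNW, hWE, hS, hSM, hSN⟩, heW, heclW⟩,
    ⟨X, TM, TN, ⟨-, hTNX, hXE, hT, hTM, hTN⟩, heTN⟩⟩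
  have hXE : X ⊆ M.E := hXE
  have hWM : W ⊆ M.closure SM := (restrict_spanning_iff hSMW hWE).mp hSM
  have hWN : W ⊆ N.closure SN := (restrict_spanning_iff hSNW (hE ▸ hWE)).mp hSN
  set Y := W ∩ X
  have hMbound : (Y \ TM).encard + 1 ≤ (SM ∩ X).encard := by
    rw [← encard_insert_of_notMem fun h => heW h.1.1]
    refine (encard_le_encard (insert_subset ?_ ?_)).trans
      (encard_closure_inter_sdiff_le hTM hXE SM)
    · exact ⟨⟨M.closure_subset_closure_of_subset_closure hWM heclW, hTNX heTN⟩,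
        fun h => disjoint_left.mp hT h heTN⟩
    · exact fun y hy => ⟨⟨hWM hy.1.1, hy.1.2⟩, hy.2⟩
  have hNbound : (Y \ TN).encard ≤ (SN ∩ X).encard := by
    refine (encard_le_encard ?_).trans (encard_closure_inter_sdiff_le hTN (hE ▸ hXE) SN)
    exact fun y hy => ⟨⟨hWN hy.1.1, hy.1.2⟩, hy.2⟩
  have hY : Y ⊆ (Y \ TM) ∪ (Y \ TN) := fun y (hy : y ∈ Y) =>
    (em (y ∈ TM)).elim (fun h => .inr ⟨hy, disjoint_left.mp hT h⟩) (fun h => .inl ⟨hy, h⟩)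
  have hcount : Y.encard + 1 ≤ Y.encard := calc
    Y.encard + 1 ≤ (Y \ TM).encard + (Y \ TN).encard + 1 := by
      gcongr; exact (encard_le_encard hY).trans (encard_union_le _ _)
    _ ≤ (SM ∩ X).encard + (SN ∩ X).encard := by
      rw [add_right_comm]; exact add_le_add hMbound hNbound
    _ = ((SM ∪ SN) ∩ X).encard := by
      rw [union_inter_distrib_right, encard_union_eq (hS.mono inter_subset_left inter_subset_left)]
    _ ≤ Y.encard := encard_le_encard (inter_subset_inter_left _ (union_subset hSMW hSNW))
  have hYfin : Y.encard ≠ ⊤ := (hfin.subset (inter_subset_left.trans hWE)).encard_lt_top.ne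
  exact lt_irrefl _ ((ENat.add_one_le_iff hYfin).mp hcount)

/-- The promises `M₊` and `M₋^*` cannot both be attainable in the same arena. -/
theorem not_both_Mplus_Mminus_star (M N : Matroid α) (hE : M.E = N.E) (hfin : M.E.Finite)
    (e : α) (he : e ∈ M.E) :
    ¬ ((∃ W SM SN, IsWave M N W SM SN ∧ e ∉ W ∧ e ∈ M.closure W) ∧
       (∃ X TM TN, IsWave M✶ N✶ X TM TN ∧ e ∈ TN)) :=
  not_both_Mplus_Mminus_star_general M N hE hfin e
end

section
/- An up-closed subset B of the set of promises and co-promises P ∪ P* is blocking (i.e., meets each of the 5 possible attainability sets) if and only if B includes one of the following ten sets: {⊥}, {⊥*}, {M_+, M_-^*}, {M_-, M_+^*}, {N_+, N_-^*}, {N_-, N_+^*}, {M_+, N_-, ⊤*}, {M_-, N_+, ⊤*}, {M_+^*, N_-^*, ⊤}, {M_-^*, N_+^*, ⊤}. -/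
/-- The set of promises `{⊥, M₋, M₊, N₋, N₊, ⊤}`. -/
inductive Promise : Type
  | bot | Mm | Mp | Nm | Np | top
  deriving DecidableEq

/-- The partial order on promises generated by `⊤ ≥ M₊ ≥ M₋ ≥ ⊥` and `⊤ ≥ N₊ ≥ N₋ ≥ ⊥`. -/
def ple : Promise → Promise → Prop
  | Promise.bot, _ => True
  | _, Promise.top => True
  | Promise.Mm, Promise.Mm => True
  | Promise.Mm, Promise.Mp => True
  | Promise.Mp, Promise.Mp => True
  | Promise.Nm, Promise.Nm => True
  | Promise.Nm, Promise.Np => True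
  | Promise.Np, Promise.Np => True
  | _, _ => False

/-- Promises and co-promises: `Sum.inl` is a promise, `Sum.inr` a co-promise. -/
abbrev PP := Promise ⊕ Promise

/-- The order on promises and co-promises: the orders on the two copies, with no
comparabilities between promises and co-promises. -/
def pple : PP → PP → Prop
  | Sum.inl p, Sum.inl q => ple p q
  | Sum.inr p, Sum.inr q => ple p q
  | _, _ => False

/-- Up-closed subsets of `PP`. -/
def UpClosed (B : Set PP) : Prop := ∀ x ∈ B, ∀ y, pple x y → y ∈ B

/-- The five possible attainability sets. -/
def attainSet1 : Set PP := Sum.inl '' Set.univ ∪ {Sum.inr Promise.bot}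
def attainSet2 : Set PP := Sum.inr '' Set.univ ∪ {Sum.inl Promise.bot}
def attainSet3 : Set PP :=
  {Sum.inl Promise.bot, Sum.inl Promise.Mm, Sum.inl Promise.Mp,
   Sum.inr Promise.bot, Sum.inr Promise.Nm, Sum.inr Promise.Np}
def attainSet4 : Set PP :=
  {Sum.inl Promise.bot, Sum.inl Promise.Nm, Sum.inl Promise.Np,
   Sum.inr Promise.bot, Sum.inr Promise.Mm, Sum.inr Promise.Mp}
def attainSet5 : Set PP :=
  {Sum.inl Promise.bot, Sum.inl Promise.Mm, Sum.inl Promise.Nm,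
   Sum.inr Promise.bot, Sum.inr Promise.Mm, Sum.inr Promise.Nm}

/-- A set of promises and co-promises is blocking if it meets each of the five
possible attainability sets. -/
def Blocking (B : Set PP) : Prop :=
  (B ∩ attainSet1).Nonempty ∧ (B ∩ attainSet2).Nonempty ∧ (B ∩ attainSet3).Nonempty ∧
  (B ∩ attainSet4).Nonempty ∧ (B ∩ attainSet5).Nonempty

/-! For an up-closed `B`, meeting an attainability set amounts to containing one of its
maximal elements, so `B` is blocking iff it contains `⊤` or `⊥*`, `⊤*` or `⊥`, `M₊` or `N₊*`,
`N₊` or `M₊*`, and one of `M₋, N₋, M₋*, N₋*`. If neither `⊥` nor `⊥*` lies in `B`, then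
`⊤, ⊤* ∈ B`; an element of the last kind, say `M₋`, together with the condition `N₊ ∨ M₊*`
mentioning the other copy of its letter gives `{M₋, M₊*}` or `{M₋, N₊, ⊤*}`, and the other three
cases are symmetric. Conversely each of the ten sets meets all five attainability sets. -/

theorem UpClosed.inter_nonempty_iff {B S T : Set PP} (hB : UpClosed B) (hTS : T ⊆ S)
    (hST : ∀ s ∈ S, ∃ t ∈ T, pple s t) : (B ∩ S).Nonempty ↔ ∃ t ∈ T, t ∈ B := by
  constructor
  · rintro ⟨s, hsB, hsS⟩
    obtain ⟨t, htT, hst⟩ := hST s hsS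
    exact ⟨t, htT, hB s hsB t hst⟩
  · rintro ⟨t, htT, htB⟩
    exact ⟨t, htB, hTS htT⟩

theorem Blocking.mono {A B : Set PP} (hA : Blocking A) (hAB : A ⊆ B) : Blocking B := by
  obtain ⟨h1, h2, h3, h4, h5⟩ := hA
  exact ⟨h1.mono (Set.inter_subset_inter_left _ hAB), h2.mono (Set.inter_subset_inter_left _ hAB),
    h3.mono (Set.inter_subset_inter_left _ hAB), h4.mono (Set.inter_subset_inter_left _ hAB),
    h5.mono (Set.inter_subset_inter_left _ hAB)⟩

open Promise

theorem UpClosed.blocking_iff {B : Set PP} (hB : UpClosed B) : Blocking B ↔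
    (Sum.inl top ∈ B ∨ Sum.inr bot ∈ B) ∧ (Sum.inr top ∈ B ∨ Sum.inl bot ∈ B) ∧
    (Sum.inl Mp ∈ B ∨ Sum.inr Np ∈ B) ∧ (Sum.inl Np ∈ B ∨ Sum.inr Mp ∈ B) ∧
    (Sum.inl Mm ∈ B ∨ Sum.inl Nm ∈ B ∨ Sum.inr Mm ∈ B ∨ Sum.inr Nm ∈ B) := by
  rw [Blocking, hB.inter_nonempty_iff (T := {Sum.inl top, Sum.inr bot}),
    hB.inter_nonempty_iff (T := {Sum.inr top, Sum.inl bot}),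
    hB.inter_nonempty_iff (T := {Sum.inl Mp, Sum.inr Np}),
    hB.inter_nonempty_iff (T := {Sum.inl Np, Sum.inr Mp}),
    hB.inter_nonempty_iff (T := {Sum.inl Mm, Sum.inl Nm, Sum.inr Mm, Sum.inr Nm})]
  · simp
  all_goals rintro (p | p) <;> cases p <;>
    simp [attainSet1, attainSet2, attainSet3, attainSet4, attainSet5, pple, ple]

/-- Characterisation of up-closed blocking sets. -/
theorem blocking_iff_contains (B : Set PP) (hB : UpClosed B) :
    Blocking B ↔
      (({Sum.inl bot} : Set PP) ⊆ B ∨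
       ({Sum.inr bot} : Set PP) ⊆ B ∨
       ({Sum.inl Mp, Sum.inr Mm} : Set PP) ⊆ B ∨
       ({Sum.inl Mm, Sum.inr Mp} : Set PP) ⊆ B ∨
       ({Sum.inl Np, Sum.inr Nm} : Set PP) ⊆ B ∨
       ({Sum.inl Nm, Sum.inr Np} : Set PP) ⊆ B ∨
       ({Sum.inl Mp, Sum.inl Nm, Sum.inr top} : Set PP) ⊆ B ∨
       ({Sum.inl Mm, Sum.inl Np, Sum.inr top} : Set PP) ⊆ B ∨
       ({Sum.inr Mp, Sum.inr Nm, Sum.inl top} : Set PP) ⊆ B ∨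
       ({Sum.inr Mm, Sum.inr Np, Sum.inl top} : Set PP) ⊆ B) := by
  constructor
  · intro h
    obtain ⟨h1, h2, h3, h4, h5⟩ := hB.blocking_iff.1 h
    simp only [Set.insert_subset_iff, Set.singleton_subset_iff]
    by_cases hbot : Sum.inl bot ∈ B
    · exact Or.inl hbot
    by_cases hbot' : Sum.inr bot ∈ B
    · exact Or.inr (Or.inl hbot')
    have htop : Sum.inl top ∈ B := h1.resolve_right hbot'
    have htop' : Sum.inr top ∈ B := h2.resolve_right hbot
    rcases h5 with hMm | hNm | hMm' | hNm' <;> rcases h3 with hMp | hNp' <;>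
      rcases h4 with hNp | hMp' <;> simp [*]
  · rintro (h | h | h | h | h | h | h | h | h | h) <;> refine Blocking.mono ?_ h <;>
      simp [Blocking, Set.Nonempty, attainSet1, attainSet2, attainSet3, attainSet4, attainSet5]
end

section
/- Let γ̄_{M_-}, γ̄_{N_+} ⊆ P − ⊥ and γ̄_{⊤*} ⊆ P* − ⊥* be up-closed sets whose union γ̄ is blocking. Then at least one of the following holds: (1) one of {M_+, M_-^*}, {M_-, M_+^*}, {N_+, N_-^*}, {N_-, N_+^*} is a subset of γ̄; (2) M_- ∈ γ̄_{M_-} and {N_+, ⊤*} ⊆ γ̄; (3) N_- ∈ γ̄_{M_-} and {M_+, ⊤*} ⊆ γ̄; (4) ⊤ ∈ γ̄_{M_-} and ({M_-^*, N_+^*} ⊆ γ̄_{⊤*} or {M_+^*, N_-^*} ⊆ γ̄_{⊤*}); (5) γ̄_{M_-} ⊆ {M_+, N_+, ⊤} and γ̄_{⊤*} ⊆ {M_+^*, N_+^*, ⊤*} and ({M_-, N_+} ⊆ γ̄ or {M_+, N_-} ⊆ γ̄); (6) γ̄_{M_-} = ∅ and N_-^* ∉ γ̄_{⊤*} and {M_-^*,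 N_+^*, ⊤} ⊆ γ̄ and γ̄_{N_+} ⊆ {N_+, ⊤}; (7) γ̄_{M_-} = ∅ and {M_+^*, N_-^*, ⊤} ⊆ γ̄ and γ̄_{N_+} ⊆ {M_+, ⊤}. -/
open Promise

/-! Blocking forces `⊤ ∈ γ̄` and `⊤* ∈ γ̄`, and, by up-closure, `M₊ ∈ γ̄ ∨ N₊* ∈ γ̄`,
`N₊ ∈ γ̄ ∨ M₊* ∈ γ̄` and `γ̄ ∩ {M₋, N₋, M₋*, N₋*} ≠ ∅`. Split on the last condition.
If `M₋* ∈ γ̄` or `N₋* ∈ γ̄`, either a crossed pair of case (1) appears or `γ̄_{M₋} ∪ γ̄_{N₊}`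
is squeezed into two elements, giving (4), (6) or (7) according to whether `⊤ ∈ γ̄_{M₋}`.
Otherwise `γ̄_{⊤*} ⊆ {M₊*, N₊*, ⊤*}`, and either a crossed pair appears or
`{M₋, N₊} ⊆ γ̄` or `{M₊, N₋} ⊆ γ̄`; then (2), (3) or (5) holds according to which
of `M₋`, `N₋` lies in `γ̄_{M₋}`. -/

def IsUpClosed (s : Set Promise) : Prop := ∀ p ∈ s, ∀ q, ple p q → q ∈ s

theorem ple_top (p : Promise) : ple p top := by
  cases p <;> trivial

namespace IsUpClosed

variable {s t : Set Promise}

theorem union (hs : IsUpClosed s) (ht : IsUpClosed t) : IsUpClosed (s ∪ t) := by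
  rintro p (hp | hp) q hpq
  exacts [Or.inl (hs p hp q hpq), Or.inr (ht p hp q hpq)]

theorem top_mem (hs : IsUpClosed s) (hne : s.Nonempty) : top ∈ s :=
  hs _ hne.some_mem _ (ple_top _)

end IsUpClosed

theorem subset_Mp_Np_top {s : Set Promise} (hbot : bot ∉ s) (hMm : Mm ∉ s) (hNm : Nm ∉ s) :
    s ⊆ {Mp, Np, top} := by
  intro p hp
  cases p <;> simp_all

theorem blocking_inl_union_inr_iff (U c : Set Promise) :
    Blocking (Sum.inl '' U ∪ Sum.inr '' c) ↔
      (U.Nonempty ∨ bot ∈ c) ∧ (c.Nonempty ∨ bot ∈ U) ∧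
      (bot ∈ U ∨ Mm ∈ U ∨ Mp ∈ U ∨ bot ∈ c ∨ Nm ∈ c ∨ Np ∈ c) ∧
      (bot ∈ U ∨ Nm ∈ U ∨ Np ∈ U ∨ bot ∈ c ∨ Mm ∈ c ∨ Mp ∈ c) ∧
      (bot ∈ U ∨ Mm ∈ U ∨ Nm ∈ U ∨ bot ∈ c ∨ Mm ∈ c ∨ Nm ∈ c) := by
  simp only [Blocking, attainSet1, attainSet2, attainSet3, attainSet4, attainSet5, Set.Nonempty,
    Set.mem_inter_iff, Set.mem_union, Set.mem_image, Set.mem_univ, true_and,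
    Set.mem_singleton_iff, Set.mem_insert_iff]
  simp [and_or_left, exists_or]

section Cases

variable {a b c : Set Promise}

theorem blocking_conditions (hU : IsUpClosed (a ∪ b)) (hc : IsUpClosed c)
    (hbU : bot ∉ a ∪ b) (hbc : bot ∉ c)
    (hblock : Blocking (Sum.inl '' (a ∪ b) ∪ Sum.inr '' c)) :
    top ∈ a ∪ b ∧ top ∈ c ∧ (Mp ∈ a ∪ b ∨ Np ∈ c) ∧ (Np ∈ a ∪ b ∨ Mp ∈ c) ∧
      (Mm ∈ a ∪ b ∨ Nm ∈ a ∪ b ∨ Mm ∈ c ∨ Nm ∈ c) := by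
  obtain ⟨h1, h2, h3, h4, h5⟩ := (blocking_inl_union_inr_iff _ _).mp hblock
  refine ⟨hU.top_mem (h1.resolve_right hbc), hc.top_mem (h2.resolve_right hbU), ?_, ?_, ?_⟩
  · rcases h3 with h | h | h | h | h | h
    exacts [absurd h hbU, Or.inl (hU _ h _ trivial), Or.inl h, absurd h hbc,
      Or.inr (hc _ h _ trivial), Or.inr h]
  · rcases h4 with h | h | h | h | h | h
    exacts [absurd h hbU, Or.inl (hU _ h _ trivial), Or.inl h, absurd h hbc,
      Or.inr (hc _ h _ trivial), Or.inr h]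
  · simpa [hbU, hbc] using h5

theorem cases_1467_of_MmStar_mem (ha : IsUpClosed a) (hU : IsUpClosed (a ∪ b))
    (hc : IsUpClosed c) (hbU : bot ∉ a ∪ b) (htop : top ∈ a ∪ b) (h3 : Mp ∈ a ∪ b ∨ Np ∈ c)
    (hMm : Mm ∈ c) :
    (Mp ∈ a ∪ b ∧ Mm ∈ c) ∨ (Np ∈ a ∪ b ∧ Nm ∈ c) ∨ (Nm ∈ a ∪ b ∧ Np ∈ c) ∨
      (top ∈ a ∧ Mm ∈ c ∧ Np ∈ c) ∨
      (a = ∅ ∧ Nm ∉ c ∧ (Mm ∈ c ∧ Np ∈ c ∧ top ∈ a ∪ b) ∧ b ⊆ {Np, top}) ∨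
      (a = ∅ ∧ (Mp ∈ c ∧ Nm ∈ c ∧ top ∈ a ∪ b) ∧ b ⊆ {Mp, top}) := by
  by_cases hMp : Mp ∈ a ∪ b
  · exact Or.inl ⟨hMp, hMm⟩
  have hNp : Np ∈ c := h3.resolve_left hMp
  by_cases hNm : Nm ∈ a ∪ b
  · exact Or.inr (Or.inr (Or.inl ⟨hNm, hNp⟩))
  by_cases htopa : top ∈ a
  · exact Or.inr (Or.inr (Or.inr (Or.inl ⟨htopa, hMm, hNp⟩)))
  have ha_empty : a = ∅ := Set.not_nonempty_iff_eq_empty.mp (mt ha.top_mem htopa)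
  have hMmU : Mm ∉ a ∪ b := fun h => hMp (hU _ h _ trivial)
  by_cases hNmc : Nm ∈ c
  · by_cases hNpU : Np ∈ a ∪ b
    · exact Or.inr (Or.inl ⟨hNpU, hNmc⟩)
    have hMpc : Mp ∈ c := hc _ hMm _ trivial
    refine Or.inr (Or.inr (Or.inr (Or.inr (Or.inr ⟨ha_empty, ⟨hMpc, hNmc, htop⟩, ?_⟩))))
    intro p hp
    cases p <;> simp_all
  · refine Or.inr (Or.inr (Or.inr (Or.inr (Or.inl ⟨ha_empty, hNmc, ⟨hMm, hNp, htop⟩, ?_⟩))))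
    intro p hp
    cases p <;> simp_all


theorem cases_147_of_NmStar_mem (ha : IsUpClosed a) (hU : IsUpClosed (a ∪ b))
    (hbU : bot ∉ a ∪ b) (htop : top ∈ a ∪ b) (h4 : Np ∈ a ∪ b ∨ Mp ∈ c) (hNm : Nm ∈ c) :
    (Mm ∈ a ∪ b ∧ Mp ∈ c) ∨ (Np ∈ a ∪ b ∧ Nm ∈ c) ∨ (top ∈ a ∧ Mp ∈ c ∧ Nm ∈ c) ∨
      (a = ∅ ∧ (Mp ∈ c ∧ Nm ∈ c ∧ top ∈ a ∪ b) ∧ b ⊆ {Mp, top}) := by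
  by_cases hNp : Np ∈ a ∪ b
  · exact Or.inr (Or.inl ⟨hNp, hNm⟩)
  have hMp : Mp ∈ c := h4.resolve_left hNp
  by_cases hMmU : Mm ∈ a ∪ b
  · exact Or.inl ⟨hMmU, hMp⟩
  by_cases htopa : top ∈ a
  · exact Or.inr (Or.inr (Or.inl ⟨htopa, hMp, hNm⟩))
  have ha_empty : a = ∅ := Set.not_nonempty_iff_eq_empty.mp (mt ha.top_mem htopa)
  have hNmU : Nm ∉ a ∪ b := fun h => hNp (hU _ h _ trivial)
  refine Or.inr (Or.inr (Or.inr ⟨ha_empty, ⟨hMp, hNm, htop⟩, ?_⟩))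
  intro p hp
  cases p <;> simp_all

theorem cases_1235_of_MmStar_NmStar_notMem (hU : IsUpClosed (a ∪ b)) (hba : bot ∉ a)
    (hbc : bot ∉ c) (htop : top ∈ c) (h3 : Mp ∈ a ∪ b ∨ Np ∈ c) (h4 : Np ∈ a ∪ b ∨ Mp ∈ c)
    (h5 : Mm ∈ a ∪ b ∨ Nm ∈ a ∪ b) (hMm : Mm ∉ c) (hNm : Nm ∉ c) :
    ((Mm ∈ a ∪ b ∧ Mp ∈ c) ∨ (Nm ∈ a ∪ b ∧ Np ∈ c)) ∨
      (Mm ∈ a ∧ Np ∈ a ∪ b ∧ top ∈ c) ∨ (Nm ∈ a ∧ Mp ∈ a ∪ b ∧ top ∈ c) ∨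
      (a ⊆ {Mp, Np, top} ∧ c ⊆ {Mp, Np, top} ∧
        ((Mm ∈ a ∪ b ∧ Np ∈ a ∪ b) ∨ (Mp ∈ a ∪ b ∧ Nm ∈ a ∪ b))) := by
  by_cases hcross : (Mm ∈ a ∪ b ∧ Mp ∈ c) ∨ (Nm ∈ a ∪ b ∧ Np ∈ c)
  · exact Or.inl hcross
  have hpair : (Mm ∈ a ∪ b ∧ Np ∈ a ∪ b) ∨ (Mp ∈ a ∪ b ∧ Nm ∈ a ∪ b) := by
    rcases h5 with hM | hN
    · exact Or.inl ⟨hM, h4.resolve_right fun hMp => hcross (Or.inl ⟨hM, hMp⟩)⟩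
    · exact Or.inr ⟨h3.resolve_right fun hNp => hcross (Or.inr ⟨hN, hNp⟩), hN⟩
  have hMp : Mp ∈ a ∪ b := hpair.elim (fun h => hU _ h.1 _ trivial) And.left
  have hNp : Np ∈ a ∪ b := hpair.elim And.right (fun h => hU _ h.2 _ trivial)
  by_cases hMma : Mm ∈ a
  · exact Or.inr (Or.inl ⟨hMma, hNp, htop⟩)
  by_cases hNma : Nm ∈ a
  · exact Or.inr (Or.inr (Or.inl ⟨hNma, hMp, htop⟩))
  exact Or.inr (Or.inr (Or.inr
    ⟨subset_Mp_Np_top hba hMma hNma, subset_Mp_Np_top hbc hMm hNm, hpair⟩))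

end Cases

/-- `gM`, `gN`, `gT` stand for `γ̄_{M₋}`, `γ̄_{N₊}`, `γ̄_{⊤*}`; the last is read as a set of
promises through `Sum.inr`. -/
theorem blocking_union_cases_minus (gM gN gT : Set Promise)
    (hbM : bot ∉ gM) (hbN : bot ∉ gN) (hbT : bot ∉ gT)
    (hupM : ∀ p ∈ gM, ∀ q, ple p q → q ∈ gM)
    (hupN : ∀ p ∈ gN, ∀ q, ple p q → q ∈ gN)
    (hupT : ∀ p ∈ gT, ∀ q, ple p q → q ∈ gT)
    (hblock : Blocking (Sum.inl '' (gM ∪ gN) ∪ Sum.inr '' gT)) :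
    -- (1) one of {M₊, M₋*}, {M₋, M₊*}, {N₊, N₋*}, {N₋, N₊*} is a subset of γ̄
    ((Mp ∈ gM ∪ gN ∧ Mm ∈ gT) ∨ (Mm ∈ gM ∪ gN ∧ Mp ∈ gT) ∨
     (Np ∈ gM ∪ gN ∧ Nm ∈ gT) ∨ (Nm ∈ gM ∪ gN ∧ Np ∈ gT)) ∨
    -- (2) M₋ ∈ γ̄_{M₋} and {N₊, ⊤*} ⊆ γ̄
    (Mm ∈ gM ∧ Np ∈ gM ∪ gN ∧ top ∈ gT) ∨
    -- (3) N₋ ∈ γ̄_{M₋} and {M₊, ⊤*} ⊆ γ̄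
    (Nm ∈ gM ∧ Mp ∈ gM ∪ gN ∧ top ∈ gT) ∨
    -- (4) ⊤ ∈ γ̄_{M₋} and {M₋*, N₊*} ⊆ γ̄_{⊤*} or {M₊*, N₋*} ⊆ γ̄_{⊤*}
    (top ∈ gM ∧ ((Mm ∈ gT ∧ Np ∈ gT) ∨ (Mp ∈ gT ∧ Nm ∈ gT))) ∨
    -- (5)
    (gM ⊆ ({Mp, Np, top} : Set Promise) ∧ gT ⊆ ({Mp, Np, top} : Set Promise) ∧
      ((Mm ∈ gM ∪ gN ∧ Np ∈ gM ∪ gN) ∨ (Mp ∈ gM ∪ gN ∧ Nm ∈ gM ∪ gN))) ∨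
    -- (6)
    (gM = ∅ ∧ Nm ∉ gT ∧ (Mm ∈ gT ∧ Np ∈ gT ∧ top ∈ gM ∪ gN) ∧
      gN ⊆ ({Np, top} : Set Promise)) ∨
    -- (7)
    (gM = ∅ ∧ (Mp ∈ gT ∧ Nm ∈ gT ∧ top ∈ gM ∪ gN) ∧
      gN ⊆ ({Mp, top} : Set Promise)) := by
  have hU : IsUpClosed (gM ∪ gN) := IsUpClosed.union hupM hupN
  have hbU : bot ∉ gM ∪ gN := fun h => h.elim hbM hbN
  obtain ⟨htopU, htopT, h3, h4, h5⟩ := blocking_conditions hU hupT hbU hbT hblock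
  by_cases hMm : Mm ∈ gT
  · have := cases_1467_of_MmStar_mem hupM hU hupT hbU htopU h3 hMm
    grind
  by_cases hNm : Nm ∈ gT
  · have := cases_147_of_NmStar_mem hupM hU hbU htopU h4 hNm
    grind
  have := cases_1235_of_MmStar_NmStar_notMem hU hbM hbT htopT h3 h4
    (h5.imp_right fun h => h.resolve_right (not_or_intro hMm hNm)) hMm hNm
  grind
end
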